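/- arXiv:2602.16194 — 3 statements merged into one kernel-verified Lean document; each statement's English description precedes it below -/
import Mathlib

section
/- There exists an instance on the real line with 9 points, panel sizes k1 = 4 and k2 = 3, a panel P1 of size 4 satisfying 1-PRF for the population, and a panel P2 ⊆ P1 of size 3 satisfying 1-PRF for population P1, such that P2 does not satisfy α-PRF for the original population for any finite α ≥ 1. -/
/-- `γ`-PRF for points on the real line given by a location map `loc`. -/
def PRFline (loc : Fin 9 → ℝ) (V P : Finset (Fin 9)) (k : ℕ) (γ : ℝ) : Prop :=
  ∀ q : ℕ, 0 < q → ∀ S : Finset (Fin 9), S ⊆ V → ∀ r : ℝ, 0 ≤ r →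
    (∀ u ∈ S, ∀ v ∈ S, |loc u - loc v| ≤ r) →
    (q : ℝ) * V.card / k ≤ S.card →
    q ≤ ((P : Set (Fin 9)) ∩ ⋃ v ∈ S, {x | |loc v - loc x| ≤ γ * r}).ncard

def loc9 : Fin 9 → ℝ := ![0, 0, 1, 10, 10, 10, 11, 11, 11]

def rep9 : Fin 9 → Fin 9 := ![0, 0, 2, 3, 3, 3, 6, 6, 6]

lemma loc9_rep9 (v : Fin 9) : loc9 (rep9 v) = loc9 v := by
  fin_cases v <;> rfl

lemma le_ncard_of_finset {q : ℕ} (T : Finset (Fin 9)) (s : Set (Fin 9))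
    (h : ↑T ⊆ s) (hq : q ≤ T.card) : q ≤ s.ncard := by
  refine hq.trans ?_
  rw [← Set.ncard_coe_finset]
  exact Set.ncard_le_ncard h (Set.toFinite s)

/-- There is a 9-point instance on the real line with panels `P₁ ⊇ P₂` of sizes 4 and 3,
where `P₁` is `1`-PRF for the population and `P₂` is `1`-PRF for `P₁`, yet `P₂` fails
`α`-PRF for the population for every finite `α ≥ 1`. -/
theorem non_divisible_counterexample :
    ∃ (loc : Fin 9 → ℝ) (P₁ P₂ : Finset (Fin 9)),
      P₂ ⊆ P₁ ∧ P₁.card = 4 ∧ P₂.card = 3 ∧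
      PRFline loc Finset.univ P₁ 4 1 ∧
      PRFline loc P₁ P₂ 3 1 ∧
      ∀ α : ℝ, 1 ≤ α → ¬ PRFline loc Finset.univ P₂ 3 α := by
  refine ⟨loc9, {0, 2, 3, 6}, {0, 2, 3}, by decide, by decide, by decide, ?_, ?_, ?_⟩
  · -- P₁ is 1-PRF for univ
    intro q hq S hS r hr hd hcard
    have hcardV : ((Finset.univ : Finset (Fin 9)).card : ℝ) = 9 := by simp
    rw [hcardV] at hcard
    have hS9 : S.card ≤ 9 := by
      simpa using Finset.card_le_card hS
    have hq4 : q ≤ 4 := by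
      by_contra h
      push_neg at h
      have : (5 : ℝ) ≤ q := by exact_mod_cast h
      have : (S.card : ℝ) ≤ 9 := by exact_mod_cast hS9
      nlinarith [hcard]
    have hfib : S.card ≤ 3 * (S.image rep9).card := by
      apply Finset.card_le_mul_card_image
      intro b _
      calc ({a ∈ S | rep9 a = b}).card ≤ ({a ∈ (Finset.univ : Finset (Fin 9)) | rep9 a = b}).card := by
            apply Finset.card_le_card
            exact Finset.filter_subset_filter _ (by intro x hx; simp)
        _ ≤ 3 := by fin_cases b <;> decide
    -- T := image of S under rep9 is contained in the target set
    apply le_ncard_of_finset (S.image rep9)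
    · intro t ht
      simp only [Finset.coe_image, Set.mem_image, Finset.mem_coe] at ht
      obtain ⟨v, hv, rfl⟩ := ht
      constructor
      · have : ∀ v : Fin 9, rep9 v ∈ ({0, 2, 3, 6} : Finset (Fin 9)) := by decide
        exact_mod_cast this v
      · refine Set.mem_iUnion₂.2 ⟨v, hv, ?_⟩
        simp [loc9_rep9 v, hr]
    · -- q ≤ (S.image rep9).card
      interval_cases q
      · -- q = 1
        have hS1 : 1 ≤ S.card := by
          by_contra h
          push_neg at h
          interval_cases hc : S.card <;> norm_num at hcard
        omega
      · have hS5 : 5 ≤ S.card := by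
          by_contra h
          push_neg at h
          have : (S.card : ℝ) ≤ 4 := by exact_mod_cast Nat.lt_succ_iff.mp h
          norm_num at hcard; linarith
        omega
      · have hS7 : 7 ≤ S.card := by
          by_contra h
          push_neg at h
          have : (S.card : ℝ) ≤ 6 := by exact_mod_cast Nat.lt_succ_iff.mp h
          norm_num at hcard; linarith
        omega
      · have hS9' : 9 ≤ S.card := by
          by_contra h
          push_neg at h
          have : (S.card : ℝ) ≤ 8 := by exact_mod_cast Nat.lt_succ_iff.mp h
          norm_num at hcard; linarith
        have hSu : S = Finset.univ := Finset.eq_univ_of_card S (le_antisymm hS9 hS9')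
        subst hSu
        have : (Finset.univ.image rep9).card = 4 := by decide
        omega
  · -- P₂ is 1-PRF for P₁
    intro q hq S hS r hr hd hcard
    have hc4 : (({0, 2, 3, 6} : Finset (Fin 9))).card = 4 := by decide
    rw [hc4] at hcard
    have hS4 : S.card ≤ 4 := hc4 ▸ Finset.card_le_card hS
    have hq3 : q ≤ 3 := by
      by_contra h
      push_neg at h
      have h5 : (4 : ℝ) ≤ q := by exact_mod_cast h
      have : (S.card : ℝ) ≤ 4 := by exact_mod_cast hS4
      norm_num at hcard
      nlinarith
    interval_cases q
    · -- q = 1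
      have hS2 : 2 ≤ S.card := by
        by_contra h
        push_neg at h
        have : (S.card : ℝ) ≤ 1 := by exact_mod_cast Nat.lt_succ_iff.mp h
        norm_num at hcard; linarith
      apply le_ncard_of_finset (S.erase 6)
      · intro t ht
        simp only [Finset.coe_erase, Set.mem_diff, Finset.mem_coe, Set.mem_singleton_iff] at ht
        obtain ⟨htS, ht6⟩ := ht
        refine ⟨?_, Set.mem_iUnion₂.2 ⟨t, htS, by simp [hr]⟩⟩
        have hmem : t ∈ ({0, 2, 3, 6} : Finset (Fin 9)) := hS htS
        have : ∀ x : Fin 9, x ∈ ({0, 2, 3, 6} : Finset (Fin 9)) → x ≠ 6 →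
            x ∈ ({0, 2, 3} : Finset (Fin 9)) := by decide
        exact_mod_cast this t hmem ht6
      · have := Finset.pred_card_le_card_erase (s := S) (a := 6)
        omega
    · -- q = 2
      have hS3 : 3 ≤ S.card := by
        by_contra h
        push_neg at h
        have : (S.card : ℝ) ≤ 2 := by exact_mod_cast Nat.lt_succ_iff.mp h
        norm_num at hcard; linarith
      apply le_ncard_of_finset (S.erase 6)
      · intro t ht
        simp only [Finset.coe_erase, Set.mem_diff, Finset.mem_coe, Set.mem_singleton_iff] at ht
        obtain ⟨htS, ht6⟩ := ht
        refine ⟨?_, Set.mem_iUnion₂.2 ⟨t, htS, by simp [hr]⟩⟩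
        have hmem : t ∈ ({0, 2, 3, 6} : Finset (Fin 9)) := hS htS
        have : ∀ x : Fin 9, x ∈ ({0, 2, 3, 6} : Finset (Fin 9)) → x ≠ 6 →
            x ∈ ({0, 2, 3} : Finset (Fin 9)) := by decide
        exact_mod_cast this t hmem ht6
      · have := Finset.pred_card_le_card_erase (s := S) (a := 6)
        omega
    · -- q = 3 : S = P₁
      have hS4' : 4 ≤ S.card := by
        by_contra h
        push_neg at h
        have : (S.card : ℝ) ≤ 3 := by exact_mod_cast Nat.lt_succ_iff.mp h
        norm_num at hcard; linarith
      have hSeq : S = ({0, 2, 3, 6} : Finset (Fin 9)) :=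
        Finset.eq_of_subset_of_card_le hS (by omega)
      have h0 : (0 : Fin 9) ∈ S := by rw [hSeq]; decide
      have h6 : (6 : Fin 9) ∈ S := by rw [hSeq]; decide
      have hr11 : (11 : ℝ) ≤ r := by
        have h := hd 6 h6 0 h0
        rw [show loc9 6 = (11 : ℝ) from rfl, show loc9 0 = (0 : ℝ) from rfl] at h
        rw [abs_of_nonneg (by norm_num)] at h
        linarith
      apply le_ncard_of_finset ({0, 2, 3} : Finset (Fin 9))
      · intro t ht
        simp only [Finset.coe_insert, Set.mem_insert_iff, Finset.coe_singleton,
          Set.mem_singleton_iff, Finset.mem_coe] at ht ⊢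
        refine ⟨by exact_mod_cast ht, Set.mem_iUnion₂.2 ⟨0, h0, ?_⟩⟩
        rw [show loc9 0 = (0 : ℝ) from rfl]
        rcases ht with rfl | rfl | rfl <;> simp only [Set.mem_setOf_eq] <;>
          [rw [show loc9 (0 : Fin 9) = (0 : ℝ) from rfl];
           rw [show loc9 (2 : Fin 9) = (1 : ℝ) from rfl];
           rw [show loc9 (3 : Fin 9) = (10 : ℝ) from rfl]] <;>
          rw [abs_of_nonpos (by norm_num)] <;> linarith
      · decide
  · -- failure of α-PRF
    intro α hα h
    have := h 1 one_pos ({6, 7, 8} : Finset (Fin 9)) (Finset.subset_univ _) 0 le_rfl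
      (by
        intro u hu v hv
        have e : ∀ w ∈ ({6, 7, 8} : Finset (Fin 9)), loc9 w = 11 := by
          intro w hw; fin_cases hw <;> rfl
        rw [e u hu, e v hv]; simp)
      (by
        rw [show ({6, 7, 8} : Finset (Fin 9)).card = 3 from by decide]
        norm_num)
    have hempty : ((({0, 2, 3} : Finset (Fin 9)) : Set (Fin 9)) ∩
        ⋃ v ∈ ({6, 7, 8} : Finset (Fin 9)), {x | |loc9 v - loc9 x| ≤ α * 0}) = ∅ := by
      ext x
      simp only [Set.mem_inter_iff, Set.mem_iUnion, Set.mem_setOf_eq, Set.mem_empty_iff_false,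
        iff_false, not_and, not_exists, Finset.mem_coe]
      intro hx v hv
      have hv11 : loc9 v = 11 := by fin_cases hv <;> rfl
      have hx10 : loc9 x = 0 ∨ loc9 x = 1 ∨ loc9 x = 10 := by
        fin_cases hx
        · exact Or.inl rfl
        · exact Or.inr (Or.inl rfl)
        · exact Or.inr (Or.inr rfl)
      rw [hv11]
      rcases hx10 with h | h | h <;> rw [h] <;> norm_num
    rw [hempty] at this
    simp at this
end

section
/- If a panel P satisfies β-PRF with respect to population V and panel size k, then P satisfies (1+√2)·β-PFC with respect to V and k. -/
/-- `β`-PRF (Proportionally Representative Fairness). -/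
def PRF {X : Type*} [PseudoMetricSpace X] (V P : Finset X) (k : ℕ) (β : ℝ) : Prop :=
  ∀ q : ℕ, 0 < q → ∀ S : Finset X, S ⊆ V → ∀ r : ℝ, 0 ≤ r →
    (∀ u ∈ S, ∀ v ∈ S, dist u v ≤ r) →
    (q : ℝ) * V.card / k ≤ S.card →
    q ≤ ((P : Set X) ∩ ⋃ v ∈ S, Metric.closedBall v (β * r)).ncard

/-- `α`-PFC (Proportionally Fair Clustering). -/
def PFC {X : Type*} [PseudoMetricSpace X] (V P : Finset X) (k : ℕ) (α : ℝ) : Prop :=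
  ∀ S : Finset X, ∀ (hsub : S ⊆ V) (hS : S.Nonempty),
    (V.card : ℝ) / k ≤ S.card →
    ∃ v ∈ S, ∃ p ∈ P,
      dist v p ≤ α * (V.inf' (hS.mono hsub) fun y => S.sup' hS fun u => dist u y)

/-- `β`-PRF implies `(1+√2)·β`-PFC. -/
theorem PRF_implies_PFC {X : Type*} [PseudoMetricSpace X]
    (V P : Finset X) (k : ℕ) (β : ℝ) (hk : 0 < k) (hβ : 1 ≤ β)
    (h : PRF V P k β) :
    PFC V P k ((1 + Real.sqrt 2) * β) := by
  intro S hsub hS hcard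
  set OPT : ℝ := V.inf' (hS.mono hsub) fun y => S.sup' hS fun u => dist u y with hOPT
  -- OPT ≥ 0
  obtain ⟨y₀, hy₀V, hy₀⟩ := Finset.exists_mem_eq_inf' (hS.mono hsub)
      (fun y => S.sup' hS fun u => dist u y)
  obtain ⟨u₀, hu₀⟩ := hS
  have hOPTnn : 0 ≤ OPT := by
    rw [hOPT, hy₀]
    exact le_trans dist_nonneg (Finset.le_sup' (fun u => dist u y₀) hu₀)
  -- diameter bound
  have hdiam : ∀ u ∈ S, ∀ v ∈ S, dist u v ≤ 2 * OPT := by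
    intro u hu v hv
    have h1 : dist u y₀ ≤ OPT := by
      rw [hOPT, hy₀]; exact Finset.le_sup' (fun u => dist u y₀) hu
    have h2 : dist v y₀ ≤ OPT := by
      rw [hOPT, hy₀]; exact Finset.le_sup' (fun u => dist u y₀) hv
    calc dist u v ≤ dist u y₀ + dist y₀ v := dist_triangle _ _ _
      _ = dist u y₀ + dist v y₀ := by rw [dist_comm y₀ v]
      _ ≤ OPT + OPT := add_le_add h1 h2
      _ = 2 * OPT := by ring
  have hPRF := h 1 one_pos S hsub (2 * OPT) (by linarith) hdiam
    (by push_cast; rw [one_mul]; exact hcard)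
  have hne : ((P : Set X) ∩ ⋃ v ∈ S, Metric.closedBall v (β * (2 * OPT))).Nonempty := by
    apply Set.nonempty_of_ncard_ne_zero
    omega
  obtain ⟨p, hpP, hpB⟩ := hne
  simp only [Set.mem_iUnion, Metric.mem_closedBall] at hpB
  obtain ⟨v, hvS, hpv⟩ := hpB
  refine ⟨v, hvS, p, hpP, ?_⟩
  have hs2 : 1 ≤ Real.sqrt 2 := by
    rw [show (1:ℝ) = Real.sqrt 1 by simp]
    exact Real.sqrt_le_sqrt (by norm_num)
  have hβ0 : 0 ≤ β := by linarith
  rw [dist_comm]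
  calc dist p v ≤ β * (2 * OPT) := hpv
    _ = 2 * β * OPT := by ring
    _ ≤ (1 + Real.sqrt 2) * β * OPT := by
        nlinarith [mul_nonneg (mul_nonneg (sub_nonneg.2 hs2) hβ0) hOPTnn]
    _ = (1 + Real.sqrt 2) * β * OPT := rfl
end

section
/- Let V be a population of n points in a pseudometric space, let Q ⊆ V be a panel (with |Q| ≤ some k), and suppose that for a family G of 'groups', each group G ∈ G has a center c_G ∈ V and radius r_G ≥ 0 with the covering property: for every S ⊆ V with |S| ≥ n/k there exists G ∈ G with r_G ≤ r(S) and some v ∈ S with d(v, c_G) ≤ r_G, where r(S) = min_{y∈V} max_{u∈S} d(u,y). If for every G ∈ G there is p ∈ Q with d(c_G, p) ≤ α·r_G, then Q satisfies (α+3)-PFC: for every S ⊆ V with |S| ≥ n/k there exist v ∈ S and p ∈ Q with d(v,p) ≤ (α+3)·r(S). -/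
/-- If every sufficiently large coalition `S` admits a group `G` (with center and radius)
whose radius is at most the optimal radius `r(S)` and which touches `S`, and the panel `Q`
has a member within `α·r_G` of every group center, then `Q` satisfies `(α+3)`-PFC. -/
theorem covering_groups_implies_PFC {X : Type*} [PseudoMetricSpace X]
    (V Q : Finset X) (k : ℕ) (hk : 0 < k) (α : ℝ) (hα : 0 ≤ α)
    (hQV : Q ⊆ V)
    (Grp : Type*) (c : Grp → X) (rad : Grp → ℝ) (hrad : ∀ g, 0 ≤ rad g)
    (hcover : ∀ S : Finset X, ∀ (hsub : S ⊆ V) (hS : S.Nonempty),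
      (V.card : ℝ) / k ≤ S.card →
      ∃ g : Grp,
        rad g ≤ (V.inf' (hS.mono hsub) fun y => S.sup' hS fun u => dist u y) ∧
        ∃ v ∈ S, dist v (c g) ≤ rad g)
    (hrep : ∀ g : Grp, ∃ p ∈ Q, dist (c g) p ≤ α * rad g) :
    PFC V Q k (α + 3) := by
  intro S hsub hS hcard
  obtain ⟨g, hg, v, hv, hvc⟩ := hcover S hsub hS hcard
  obtain ⟨p, hp, hcp⟩ := hrep g
  refine ⟨v, hv, p, hp, ?_⟩
  set r := V.inf' (hS.mono hsub) fun y => S.sup' hS fun u => dist u y with hr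
  have hr0 : 0 ≤ r := by
    obtain ⟨y, hy, hyeq⟩ := Finset.exists_mem_eq_inf' (hS.mono hsub)
      (fun y => S.sup' hS fun u => dist u y)
    rw [hr, hyeq]
    obtain ⟨u, hu⟩ := hS
    exact le_trans dist_nonneg (Finset.le_sup' (fun u => dist u y) hu)
  calc dist v p ≤ dist v (c g) + dist (c g) p := dist_triangle _ _ _
    _ ≤ rad g + α * rad g := add_le_add hvc hcp
    _ = (1 + α) * rad g := by ring
    _ ≤ (1 + α) * r := by
        apply mul_le_mul_of_nonneg_left hg; linarith
    _ ≤ (α + 3) * r := by nlinarith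
end
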